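/- arXiv:2604.01237 — 2 statements merged into one kernel-verified Lean document; each statement's English description precedes it below -/
import Mathlib

section
/- Let T be a finite family of N ≥ 3 linear equations in two real unknowns, each nondegenerate (nonzero coefficient vector in ℝ²). If every subfamily of 3 equations has a common solution in ℝ², then all N equations have a common solution. -/
open scoped RealInnerProductSpace

theorem helly_lines_R2 (N : ℕ) (hN : 3 ≤ N)
    (a : Fin N → EuclideanSpace ℝ (Fin 2)) (d : Fin N → ℝ)
    (ha : ∀ i, a i ≠ 0)
    (h3 : ∀ s : Finset (Fin N), s.card = 3 →
      ∃ x : EuclideanSpace ℝ (Fin 2), ∀ i ∈ s, ⟪a i, x⟫ = d i) :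
    ∃ x : EuclideanSpace ℝ (Fin 2), ∀ i, ⟪a i, x⟫ = d i := by
  have hrank : Module.finrank ℝ (EuclideanSpace ℝ (Fin 2)) = 2 := by simp
  have := Convex.helly_theorem (𝕜 := ℝ) (F := fun i => {x : EuclideanSpace ℝ (Fin 2) | ⟪a i, x⟫ = d i})
    (s := Finset.univ (α := Fin N))
    (by simpa [hrank] using hN)
    (fun i _ => by
      exact convex_hyperplane ((innerSL ℝ (a i)).toLinearMap.isLinear) (d i))
    (fun I _ hI => by
      obtain ⟨x, hx⟩ := h3 I (by simpa [hrank] using hI)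
      exact ⟨x, by simpa using hx⟩)
  obtain ⟨x, hx⟩ := this
  simp only [Set.mem_iInter, Set.mem_setOf_eq] at hx
  exact ⟨x, fun i => hx i (Finset.mem_univ i)⟩
end

section
/- Helly's theorem in the plane for convex sets specialized to disks via induction: if C₁, …, C_{N+1} are closed disks in ℝ² (N ≥ 3) such that every 3 of them meet, then assuming C₁ ∩ ⋯ ∩ C_N ≠ ∅, the set C₁ ∩ ⋯ ∩ C_N and the disk C_{N+1} cannot be disjoint. -/
theorem helly_disks_inductive_step (N : ℕ) (hN : 3 ≤ N)
    (c : Fin (N + 1) → EuclideanSpace ℝ (Fin 2)) (r : Fin (N + 1) → ℝ)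
    (hr : ∀ i, 0 ≤ r i)
    (h3 : ∀ i j k : Fin (N + 1),
      (Metric.closedBall (c i) (r i) ∩ Metric.closedBall (c j) (r j) ∩
        Metric.closedBall (c k) (r k)).Nonempty)
    (hN' : (⋂ i : Fin N, Metric.closedBall (c i.castSucc) (r i.castSucc)).Nonempty) :
    ¬ Disjoint (⋂ i : Fin N, Metric.closedBall (c i.castSucc) (r i.castSucc))
      (Metric.closedBall (c (Fin.last N)) (r (Fin.last N))) := by
  have hall : (⋂ i ∈ (Finset.univ : Finset (Fin (N + 1))),
      Metric.closedBall (c i) (r i)).Nonempty := by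
    apply Convex.helly_theorem' (𝕜 := ℝ) (fun i _ => convex_closedBall _ _)
    intro I _ hIcard
    have hrank : Module.finrank ℝ (EuclideanSpace ℝ (Fin 2)) = 2 := by simp
    rw [hrank] at hIcard
    have hcard3 : (3 : ℕ) ≤ (Finset.univ : Finset (Fin (N + 1))).card := by
      simp; omega
    obtain ⟨J, hIJ, -, hJcard⟩ :=
      Finset.exists_subsuperset_card_eq (Finset.subset_univ I) hIcard hcard3
    obtain ⟨a, b, d, -, -, -, rfl⟩ := Finset.card_eq_three.mp hJcard
    obtain ⟨x, hx1, hx2⟩ := h3 a b d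
    obtain ⟨hxa, hxb⟩ := hx1
    refine ⟨x, Set.mem_biInter fun i hi => ?_⟩
    have := hIJ hi
    simp only [Finset.mem_insert, Finset.mem_singleton] at this
    rcases this with rfl | rfl | rfl <;> assumption
  obtain ⟨x, hx⟩ := hall
  simp only [Finset.mem_univ, Set.iInter_true, Set.mem_iInter] at hx
  rw [Set.not_disjoint_iff]
  exact ⟨x, Set.mem_iInter.mpr fun i => hx i.castSucc, hx (Fin.last N)⟩
end
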